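/- For every p ∈ [0,1], the Pauli covariance parameter of the amplitude damping channel A_p equals cov_P(A_p) = (1/2)‖A_p − (A_p)_P‖_⋄ = p/2, where (A_p)_P is the Pauli twirl of A_p. -/

import Mathlib

open scoped BigOperators Kronecker ComplexOrder
open Matrix MeasureTheory Filter

noncomputable section

abbrev Mat (n : ℕ) := Matrix (Fin n) (Fin n) ℂ

/-- A density matrix: positive semidefinite with unit trace. -/
def IsDensity {ι : Type} [Fintype ι] (ρ : Matrix ι ι ℂ) : Prop :=
  ρ.PosSemidef ∧ ρ.trace = 1

/-- The trace norm ‖M‖₁ = tr √(MᴴM). -/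
def traceNorm {ι : Type} [Fintype ι] [DecidableEq ι] (M : Matrix ι ι ℂ) : ℝ :=
  ((Matrix.posSemidef_conjTranspose_mul_self M).1.eigenvectorUnitary.1
    * Matrix.diagonal (((↑) : ℝ → ℂ) ∘ (√·) ∘ (Matrix.posSemidef_conjTranspose_mul_self M).1.eigenvalues)
    * (star (Matrix.posSemidef_conjTranspose_mul_self M).1.eigenvectorUnitary : Matrix ι ι ℂ)).trace.re

/-- The rank-one operator |v⟩⟨v| associated to a vector. -/
def vecState {ι : Type} (v : ι → ℂ) : Matrix ι ι ℂ :=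
  Matrix.of fun i j => v i * star (v j)

/-- Partial trace over the first tensor factor. -/
def ptraceLeft {R A : Type} [Fintype R] (M : Matrix (R × A) (R × A) ℂ) : Matrix A A ℂ :=
  Matrix.of fun a a' => ∑ r, M (r, a) (r, a')

/-- Partial trace over the second tensor factor. -/
def ptraceRight {A E : Type} [Fintype E] (M : Matrix (A × E) (A × E) ℂ) : Matrix A A ℂ :=
  Matrix.of fun a a' => ∑ e, M (a, e) (a', e)

/-- The extension id_R ⊗ Φ of a linear map on matrices. -/
def idTensor {R A B : Type} (Φ : Matrix A A ℂ →ₗ[ℂ] Matrix B B ℂ) :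
    Matrix (R × A) (R × A) ℂ →ₗ[ℂ] Matrix (R × B) (R × B) ℂ where
  toFun M := Matrix.of fun p q => Φ (Matrix.of fun a a' => M (p.1, a) (q.1, a')) p.2 q.2
  map_add' M N := by
    ext p q
    have h : (Matrix.of fun a a' => M (p.1, a) (q.1, a') + N (p.1, a) (q.1, a'))
        = (Matrix.of fun a a' => M (p.1, a) (q.1, a'))
          + (Matrix.of fun a a' => N (p.1, a) (q.1, a')) := by
      ext a a'; simp [Matrix.add_apply]
    simp only [Matrix.of_apply, Matrix.add_apply]
    rw [h, map_add]
    simp [Matrix.add_apply]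
  map_smul' c M := by
    ext p q
    have h : (Matrix.of fun a a' => c • M (p.1, a) (q.1, a'))
        = c • (Matrix.of fun a a' => M (p.1, a) (q.1, a')) := by
      ext a a'; simp [Matrix.smul_apply]
    simp only [Matrix.of_apply, Matrix.smul_apply]
    rw [h, Φ.map_smul]
    simp [Matrix.smul_apply]

/-- A linear map is completely positive and trace preserving (a quantum channel). -/
def IsCPTP {A B : Type} [Fintype A] [Fintype B] (Φ : Matrix A A ℂ →ₗ[ℂ] Matrix B B ℂ) : Prop :=
  (∀ (r : ℕ) (M : Matrix (Fin r × A) (Fin r × A) ℂ), M.PosSemidef → (idTensor Φ M).PosSemidef)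
    ∧ ∀ M : Matrix A A ℂ, (Φ M).trace = M.trace

/-- The tensor product Φ ⊗ Ψ of two linear maps on matrices. -/
def tensorMap {A B C D : Type} [Fintype A] [DecidableEq A] [Fintype C]
    (Φ : Matrix A A ℂ →ₗ[ℂ] Matrix B B ℂ) (Ψ : Matrix C C ℂ →ₗ[ℂ] Matrix D D ℂ) :
    Matrix (A × C) (A × C) ℂ →ₗ[ℂ] Matrix (B × D) (B × D) ℂ where
  toFun M := Matrix.of fun p q => ∑ a : A, ∑ a' : A,
      Φ (Matrix.single a a' 1) p.1 q.1
        * Ψ (Matrix.of fun c c' => M (a, c) (a', c')) p.2 q.2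
  map_add' M N := by
    ext p q
    have h : ∀ a a' : A, (Matrix.of fun c c' => M (a, c) (a', c') + N (a, c) (a', c'))
        = (Matrix.of fun c c' => M (a, c) (a', c'))
          + (Matrix.of fun c c' => N (a, c) (a', c')) := by
      intro a a'; ext c c'; simp [Matrix.add_apply]
    simp only [Matrix.of_apply, Matrix.add_apply]
    rw [← Finset.sum_add_distrib]
    refine Finset.sum_congr rfl fun a _ => ?_
    rw [← Finset.sum_add_distrib]
    refine Finset.sum_congr rfl fun a' _ => ?_
    rw [h a a', map_add]
    simp [Matrix.add_apply, mul_add]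
  map_smul' k M := by
    ext p q
    have h : ∀ a a' : A, (Matrix.of fun c c' => k * M (a, c) (a', c'))
        = k • (Matrix.of fun c c' => M (a, c) (a', c')) := by
      intro a a'; ext c c'; simp [Matrix.smul_apply, smul_eq_mul]
    simp only [Matrix.of_apply, Matrix.smul_apply, smul_eq_mul, RingHom.id_apply]
    rw [Finset.mul_sum]
    refine Finset.sum_congr rfl fun a _ => ?_
    rw [Finset.mul_sum]
    refine Finset.sum_congr rfl fun a' _ => ?_
    rw [h a a', Ψ.map_smul]
    simp only [Matrix.smul_apply, smul_eq_mul]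
    ring
  
/-- The n-fold tensor power Φ^{⊗n} of a linear map on matrices. -/
def powMap {A B : Type} [Fintype A] [DecidableEq A] [Fintype B] [DecidableEq B]
    (Φ : Matrix A A ℂ →ₗ[ℂ] Matrix B B ℂ) :
    (n : ℕ) → (Matrix (Fin n → A) (Fin n → A) ℂ →ₗ[ℂ] Matrix (Fin n → B) (Fin n → B) ℂ)
  | 0 => (Matrix.reindexLinearEquiv ℂ ℂ (Equiv.ofUnique (Fin 0 → A) (Fin 0 → B))
      (Equiv.ofUnique (Fin 0 → A) (Fin 0 → B))).toLinearMap
  | (n + 1) =>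
      (Matrix.reindexLinearEquiv ℂ ℂ (Fin.insertNthEquiv (fun _ => B) 0).symm.symm
          (Fin.insertNthEquiv (fun _ => B) 0).symm.symm).toLinearMap
        ∘ₗ tensorMap Φ (powMap Φ n)
        ∘ₗ (Matrix.reindexLinearEquiv ℂ ℂ (Fin.insertNthEquiv (fun _ => A) 0).symm
          (Fin.insertNthEquiv (fun _ => A) 0).symm).toLinearMap

open scoped Classical in
/-- The von Neumann entropy (base 2), via the eigenvalues of a Hermitian matrix. -/
def vnEntropy {ι : Type} [Fintype ι] [DecidableEq ι] (ρ : Matrix ι ι ℂ) : ℝ :=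
  if h : ρ.IsHermitian then ∑ i, -(h.eigenvalues i * Real.logb 2 (h.eigenvalues i)) else 0

/-- The function g(ε) = (1+ε)log₂(1+ε) − ε log₂ ε (with the convention 0·log 0 = 0). -/
def gfun (x : ℝ) : ℝ := (1 + x) * Real.logb 2 (1 + x) - x * Real.logb 2 x

/-- A finite ensemble of density matrices. -/
structure Ensemble (A : Type) [Fintype A] where
  m : ℕ
  p : Fin m → ℝ
  p_nonneg : ∀ i, 0 ≤ p i
  p_sum : ∑ i, p i = 1
  ρ : Fin m → Matrix A A ℂ
  ρ_density : ∀ i, IsDensity (ρ i)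

/-- A finite ensemble of pure states, given by unit vectors. -/
structure PureEnsemble (A : Type) [Fintype A] where
  m : ℕ
  p : Fin m → ℝ
  p_nonneg : ∀ i, 0 ≤ p i
  p_sum : ∑ i, p i = 1
  v : Fin m → (A → ℂ)
  pure : ∀ i, IsDensity (vecState (v i))

/-- The Holevo information of a (channel given as a) linear map. -/
def holevoMap {A B : Type} [Fintype A] [Fintype B] [DecidableEq B]
    (Φ : Matrix A A ℂ →ₗ[ℂ] Matrix B B ℂ) : ℝ :=
  ⨆ e : Ensemble A,
    (vnEntropy (Φ (∑ i, (e.p i : ℂ) • e.ρ i)) - ∑ i, e.p i * vnEntropy (Φ (e.ρ i)))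

/-- The classical capacity: the regularized Holevo information. -/
def classicalCapacity {A B : Type} [Fintype A] [DecidableEq A] [Fintype B] [DecidableEq B]
    (Φ : Matrix A A ℂ →ₗ[ℂ] Matrix B B ℂ) : ℝ :=
  Filter.limsup (fun n : ℕ => holevoMap (powMap Φ n) / (n : ℝ)) Filter.atTop

/-- Half the diamond norm of the difference of two maps:
the supremum over reference sizes and density inputs of half the output trace distance. -/
def diamondDist {A B : Type} [Fintype A] [Fintype B] [DecidableEq B]
    (Φ Ψ : Matrix A A ℂ →ₗ[ℂ] Matrix B B ℂ) : ℝ :=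
  ⨆ r : ℕ, ⨆ ρ : {ρ : Matrix (Fin r × A) (Fin r × A) ℂ // IsDensity ρ},
    (1 / 2) * traceNorm (idTensor Φ ρ.1 - idTensor Ψ ρ.1)

/-- The diamond norm of the difference of two maps (without the factor 1/2). -/
def diamondDistFull {A B : Type} [Fintype A] [Fintype B] [DecidableEq B]
    (Φ Ψ : Matrix A A ℂ →ₗ[ℂ] Matrix B B ℂ) : ℝ :=
  ⨆ r : ℕ, ⨆ ρ : {ρ : Matrix (Fin r × A) (Fin r × A) ℂ // IsDensity ρ},
    traceNorm (idTensor Φ ρ.1 - idTensor Ψ ρ.1)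

/-- Conjugation ρ ↦ W ρ Wᴴ as a linear map. -/
def conjMap {ι κ : Type} [Fintype ι] [Fintype κ] (W : Matrix κ ι ℂ) :
    Matrix ι ι ℂ →ₗ[ℂ] Matrix κ κ ℂ where
  toFun ρ := W * ρ * Wᴴ
  map_add' ρ σ := by simp [Matrix.mul_add, Matrix.add_mul]
  map_smul' c ρ := by simp [Matrix.mul_smul, Matrix.smul_mul]

/-- A classical–quantum state ∑ₓ p(x) |x⟩⟨x| ⊗ ρ(x). -/
def cqState {X ι : Type} [DecidableEq X] (p : X → ℝ) (ρ : X → Matrix ι ι ℂ) :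
    Matrix (X × ι) (X × ι) ℂ :=
  Matrix.of fun a b => if a.1 = b.1 then (p a.1 : ℂ) * ρ a.1 a.2 b.2 else 0

/-- A generalized divergence: a family of real functionals on pairs of matrices, one for each
finite-dimensional system, satisfying the data-processing inequality under quantum channels. -/
structure GenDivergence where
  D : ∀ {ι : Type} [Fintype ι] [DecidableEq ι], Matrix ι ι ℂ → Matrix ι ι ℂ → ℝ
  data_proc : ∀ {ι κ : Type} [Fintype ι] [DecidableEq ι] [Fintype κ] [DecidableEq κ]
      (Λ : Matrix ι ι ℂ →ₗ[ℂ] Matrix κ κ ℂ), IsCPTP Λ →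
      ∀ ρ σ : Matrix ι ι ℂ, IsDensity ρ → σ.PosSemidef → D (Λ ρ) (Λ σ) ≤ D ρ σ

/-- The direct-sum property of a generalized divergence on classical–quantum states. -/
def HasDirectSum (𝒟 : GenDivergence) : Prop :=
  ∀ {X ι : Type} [Fintype X] [DecidableEq X] [Fintype ι] [DecidableEq ι]
    (p : X → ℝ), (∀ x, 0 ≤ p x) → (∑ x, p x) = 1 →
    ∀ (ρ σ : X → Matrix ι ι ℂ), (∀ x, IsDensity (ρ x)) → (∀ x, IsDensity (σ x)) →
    𝒟.D (cqState p ρ) (cqState p σ) = ∑ x, p x * 𝒟.D (ρ x) (σ x)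

/-- The generalized channel divergence: optimization over pure inputs with reference R ≅ A. -/
def chanDiv (𝒟 : GenDivergence) {A B : Type} [Fintype A] [DecidableEq A]
    [Fintype B] [DecidableEq B] (Φ Ψ : Matrix A A ℂ →ₗ[ℂ] Matrix B B ℂ) : ℝ :=
  ⨆ v : {v : A × A → ℂ // IsDensity (vecState v)},
    𝒟.D (idTensor Φ (vecState v.1)) (idTensor Ψ (vecState v.1))

/-- The maximally entangled state on A ⊗ A. -/
def maxEnt (A : Type) [Fintype A] [DecidableEq A] : Matrix (A × A) (A × A) ℂ :=
  vecState (fun p => if p.1 = p.2 then (((Real.sqrt (Fintype.card A))⁻¹ : ℝ) : ℂ) else 0)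

/-- The Choi operator of a linear map on matrices. -/
def choi {A B : Type} [Fintype A] [DecidableEq A]
    (Φ : Matrix A A ℂ →ₗ[ℂ] Matrix B B ℂ) : Matrix (A × B) (A × B) ℂ :=
  idTensor Φ (Matrix.of fun p q => if p.1 = p.2 ∧ q.1 = q.2 then 1 else 0)

/-- Separability of a bipartite operator: a finite sum of tensor products of
positive semidefinite operators. -/
def IsSepState {A B : Type} [Fintype A] [Fintype B]
    (M : Matrix (A × B) (A × B) ℂ) : Prop :=
  ∃ (k : ℕ) (P : Fin k → Matrix A A ℂ) (Q : Fin k → Matrix B B ℂ),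
    (∀ i, (P i).PosSemidef) ∧ (∀ i, (Q i).PosSemidef) ∧ M = ∑ i, P i ⊗ₖ Q i

/-- An entanglement-breaking channel: a channel whose Choi operator is separable. -/
def IsEBChannel {A B : Type} [Fintype A] [DecidableEq A] [Fintype B]
    (Φ : Matrix A A ℂ →ₗ[ℂ] Matrix B B ℂ) : Prop :=
  IsCPTP Φ ∧ IsSepState (choi Φ)

/-- φ is a purification (with reference system R on the left) of the state ρ. -/
def IsPurification {R A : Type} [Fintype R] [Fintype A]
    (φ : Matrix (R × A) (R × A) ℂ) (ρ : Matrix A A ℂ) : Prop :=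
  (∃ v : R × A → ℂ, φ = vecState v) ∧ IsDensity φ ∧ ptraceLeft φ = ρ

/-- The channel ρ ↦ tr_E (V ρ Vᴴ) induced by an isometry V : A → B ⊗ E. -/
def dilMap {A B E : Type} [Fintype A] [Fintype B] [Fintype E]
    (V : Matrix (B × E) A ℂ) : Matrix A A ℂ →ₗ[ℂ] Matrix B B ℂ where
  toFun ρ := ptraceRight (V * ρ * Vᴴ)
  map_add' ρ σ := by
    ext a a'
    simp [ptraceRight, Matrix.mul_add, Matrix.add_mul, Matrix.add_apply,
      Finset.sum_add_distrib]
  map_smul' c ρ := by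
    ext a a'
    simp [ptraceRight, Matrix.mul_smul, Matrix.smul_mul, Matrix.smul_apply,
      Finset.mul_sum, smul_eq_mul]

/-- The complementary channel ρ ↦ tr_B (V ρ Vᴴ) induced by an isometry V : A → B ⊗ E. -/
def complMap {A B E : Type} [Fintype A] [Fintype B] [Fintype E]
    (V : Matrix (B × E) A ℂ) : Matrix A A ℂ →ₗ[ℂ] Matrix E E ℂ where
  toFun ρ := ptraceLeft (V * ρ * Vᴴ)
  map_add' ρ σ := by
    ext a a'
    simp [ptraceLeft, Matrix.mul_add, Matrix.add_mul, Matrix.add_apply,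
      Finset.sum_add_distrib]
  map_smul' c ρ := by
    ext a a'
    simp [ptraceLeft, Matrix.mul_smul, Matrix.smul_mul, Matrix.smul_apply,
      Finset.mul_sum, smul_eq_mul]

/-- A Hadamard channel: some Stinespring dilation has entanglement-breaking complement. -/
def IsHadamardChan {A B : Type} [Fintype A] [DecidableEq A] [Fintype B] [DecidableEq B]
    (Φ : Matrix A A ℂ →ₗ[ℂ] Matrix B B ℂ) : Prop :=
  ∃ (e : ℕ) (V : Matrix (B × Fin e) A ℂ), Vᴴ * V = 1 ∧
    (∀ ρ, Φ ρ = ptraceRight (V * ρ * Vᴴ)) ∧ IsSepState (choi (complMap V))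

/-- Covariance of a channel with respect to unitary representations of a group. -/
def CovariantChan {G A B : Type} [Group G] [Fintype A] [DecidableEq A]
    [Fintype B] [DecidableEq B]
    (U : G →* Matrix.unitaryGroup A ℂ) (V : G →* Matrix.unitaryGroup B ℂ)
    (Φ : Matrix A A ℂ →ₗ[ℂ] Matrix B B ℂ) : Prop :=
  ∀ (g : G) (ρ : Matrix A A ℂ),
    (V g : Matrix B B ℂ) * Φ ρ * (V g : Matrix B B ℂ)ᴴ
      = Φ ((U g : Matrix A A ℂ) * ρ * (U g : Matrix A A ℂ)ᴴ)

/-- A unitary 1-design: averaging over the group sends every matrix to tr(ρ)·I/d. -/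
def IsOneDesign {G A : Type} [Group G] [Fintype G] [Fintype A] [DecidableEq A]
    (U : G →* Matrix.unitaryGroup A ℂ) : Prop :=
  ∀ ρ : Matrix A A ℂ,
    (Fintype.card G : ℂ)⁻¹ • ∑ g, (U g : Matrix A A ℂ) * ρ * (U g : Matrix A A ℂ)ᴴ
      = (ρ.trace * (Fintype.card A : ℂ)⁻¹) • (1 : Matrix A A ℂ)

/-- Pauli X. -/
def σX : Mat 2 := !![0, 1; 1, 0]
/-- Pauli Y. -/
def σY : Mat 2 := !![0, -Complex.I; Complex.I, 0]
/-- Pauli Z. -/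
def σZ : Mat 2 := !![1, 0; 0, -1]

/-- The Pauli twirl of a qubit channel. -/
def pauliTwirl (Φ : Mat 2 →ₗ[ℂ] Mat 2) : Mat 2 →ₗ[ℂ] Mat 2 :=
  ((4 : ℂ)⁻¹) • (Φ + conjMap σX ∘ₗ Φ ∘ₗ conjMap σX + conjMap σY ∘ₗ Φ ∘ₗ conjMap σY
    + conjMap σZ ∘ₗ Φ ∘ₗ conjMap σZ)

/-- The amplitude damping channel with damping parameter p. -/
def ampDamp (p : ℝ) : Mat 2 →ₗ[ℂ] Mat 2 :=
  conjMap (!![1, 0; 0, ((Real.sqrt (1 - p) : ℝ) : ℂ)] : Mat 2)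
    + conjMap (!![0, ((Real.sqrt p : ℝ) : ℂ); 0, 0] : Mat 2)

/-- The qubit depolarizing channel with parameter p. -/
def depol (p : ℝ) : Mat 2 →ₗ[ℂ] Mat 2 :=
  (((1 - p : ℝ) : ℂ)) • LinearMap.id
    + (((p / 3 : ℝ) : ℂ)) • (conjMap σX + conjMap σY + conjMap σZ)

/-- The Z-dephasing channel with parameter p. -/
def deph (p : ℝ) : Mat 2 →ₗ[ℂ] Mat 2 :=
  (((1 - p : ℝ) : ℂ)) • LinearMap.id + ((p : ℝ) : ℂ) • conjMap σZ

/-- The entanglement-breaking parameter: distance to the nearest EB channel. -/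
def ebParam {A B : Type} [Fintype A] [DecidableEq A] [Fintype B] [DecidableEq B]
    (Φ : Matrix A A ℂ →ₗ[ℂ] Matrix B B ℂ) : ℝ :=
  ⨅ M : {M : Matrix A A ℂ →ₗ[ℂ] Matrix B B ℂ // IsEBChannel M}, diamondDist Φ M.1

end

/-! The amplitude damping channel acts on Pauli components by `I ↦ I + p Z`, `X ↦ √(1-p) X`,
`Y ↦ √(1-p) Y`, `Z ↦ (1-p) Z`, and the Pauli twirl keeps only the diagonal of this transfer
matrix. Hence `A_p - (A_p)_P` is the map `ρ ↦ (p/2) tr(ρ) Z`, so its extension sends every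
input `ρ` on `R ⊗ A` to `tr_A(ρ) ⊗ (p/2) Z`. For `σ ≥ 0` the absolute value of `σ ⊗ Z` is
`σ ⊗ 1`, so every density input gives trace norm exactly `p`. -/

lemma idTensor_sub {R A B : Type} (Φ Ψ : Matrix A A ℂ →ₗ[ℂ] Matrix B B ℂ)
    (M : Matrix (R × A) (R × A) ℂ) :
    idTensor (Φ - Ψ) M = idTensor Φ M - idTensor Ψ M := rfl

lemma idTensor_eq_ptraceRight_kronecker {R A B : Type} [Fintype A]
    {Φ : Matrix A A ℂ →ₗ[ℂ] Matrix B B ℂ} {N : Matrix B B ℂ} (hΦ : ∀ ρ, Φ ρ = ρ.trace • N)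
    (M : Matrix (R × A) (R × A) ℂ) :
    idTensor Φ M = ptraceRight M ⊗ₖ N := by
  ext ⟨r, b⟩ ⟨r', b'⟩
  simp [idTensor, hΦ, Matrix.trace, ptraceRight]

lemma ptraceRight_eq_sum_submatrix {A E : Type} [Fintype E] (M : Matrix (A × E) (A × E) ℂ) :
    ptraceRight M = ∑ e, M.submatrix (·, e) (·, e) := by
  ext a a'
  simp [ptraceRight, Matrix.sum_apply]

lemma Matrix.PosSemidef.ptraceRight {A E : Type} [Fintype A] [Fintype E]
    {M : Matrix (A × E) (A × E) ℂ} (hM : M.PosSemidef) : (ptraceRight M).PosSemidef := by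
  rw [ptraceRight_eq_sum_submatrix]
  exact Matrix.posSemidef_sum _ fun e _ => hM.submatrix _

lemma trace_ptraceRight {A E : Type} [Fintype A] [Fintype E] (M : Matrix (A × E) (A × E) ℂ) :
    (ptraceRight M).trace = M.trace := by
  simp [ptraceRight, Matrix.trace, Fintype.sum_prod_type]

lemma IsDensity.ptraceRight {A E : Type} [Fintype A] [Fintype E]
    {ρ : Matrix (A × E) (A × E) ℂ} (hρ : IsDensity ρ) : IsDensity (ptraceRight ρ) :=
  ⟨hρ.1.ptraceRight, (trace_ptraceRight ρ).trans hρ.2⟩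

open scoped MatrixOrder in
lemma traceNorm_eq_re_trace_sqrt {ι : Type} [Fintype ι] [DecidableEq ι] (M : Matrix ι ι ℂ) :
    traceNorm M = (CFC.sqrt (Mᴴ * M)).trace.re := by
  have hM := Matrix.posSemidef_conjTranspose_mul_self M
  rw [CFC.sqrt_eq_real_sqrt _ hM.nonneg, cfcₙ_eq_cfc, hM.1.cfc_eq]
  rfl

open scoped MatrixOrder in
lemma traceNorm_kronecker_of_unitary {ι κ : Type} [Fintype ι] [DecidableEq ι] [Fintype κ]
    [DecidableEq κ] {P : Matrix ι ι ℂ} (hP : P.PosSemidef) {U : Matrix κ κ ℂ}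
    (hU : Uᴴ * U = 1) :
    traceNorm (P ⊗ₖ U) = P.trace.re * Fintype.card κ := by
  have hsq : (P ⊗ₖ (1 : Matrix κ κ ℂ)) * (P ⊗ₖ 1) = (P ⊗ₖ U)ᴴ * (P ⊗ₖ U) := by
    rw [Matrix.conjTranspose_kronecker, ← Matrix.mul_kronecker_mul, ← Matrix.mul_kronecker_mul,
      hP.1.eq, hU, Matrix.one_mul]
  have hsqrt := CFC.sqrt_unique hsq (hP.kronecker Matrix.PosSemidef.one).nonneg
  rw [traceNorm_eq_re_trace_sqrt, hsqrt, Matrix.trace_kronecker, Matrix.trace_one]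
  simp

lemma exists_isDensity (ι : Type) [Fintype ι] [Nonempty ι] :
    ∃ ρ : Matrix ι ι ℂ, IsDensity ρ := by
  classical
  obtain ⟨i⟩ := ‹Nonempty ι›
  refine ⟨Matrix.diagonal (Pi.single i 1), Matrix.PosSemidef.diagonal ?_, by simp [Matrix.trace]⟩
  exact Pi.single_nonneg.2 zero_le_one

lemma diamondDist_eq_of_forall_isDensity {A B : Type} [Fintype A] [Nonempty A] [Fintype B]
    [DecidableEq B] {Φ Ψ : Matrix A A ℂ →ₗ[ℂ] Matrix B B ℂ} {c : ℝ} (hc : 0 ≤ c)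
    (h : ∀ (r : ℕ) (ρ : Matrix (Fin r × A) (Fin r × A) ℂ), IsDensity ρ →
      (1 / 2) * traceNorm (idTensor Φ ρ - idTensor Ψ ρ) = c) :
    diamondDist Φ Ψ = c := by
  have hle : ∀ r : ℕ, ⨆ ρ : {ρ : Matrix (Fin r × A) (Fin r × A) ℂ // IsDensity ρ},
      (1 / 2) * traceNorm (idTensor Φ ρ.1 - idTensor Ψ ρ.1) ≤ c :=
    fun r => Real.iSup_le (fun ρ => (h r ρ.1 ρ.2).le) hc
  obtain ⟨ρ₀, hρ₀⟩ := exists_isDensity (Fin 1 × A)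
  refine le_antisymm (ciSup_le hle) ?_
  refine le_ciSup_of_le ⟨c, Set.forall_mem_range.2 hle⟩ 1 ?_
  exact le_ciSup_of_le ⟨c, Set.forall_mem_range.2 fun ρ => (h 1 ρ.1 ρ.2).le⟩ ⟨ρ₀, hρ₀⟩
    (h 1 ρ₀ hρ₀).ge

lemma conjTranspose_fin_two {α : Type*} [Star α] (a b c d : α) :
    (!![a, b; c, d] : Matrix (Fin 2) (Fin 2) α)ᴴ = !![star a, star c; star b, star d] := by
  ext i j; fin_cases i <;> fin_cases j <;> rfl

lemma conjMap_σX_apply (ρ : Mat 2) : conjMap σX ρ = !![ρ 1 1, ρ 1 0; ρ 0 1, ρ 0 0] := by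
  rw [Matrix.eta_fin_two ρ]
  simp [conjMap, σX, conjTranspose_fin_two]

lemma conjMap_σY_apply (ρ : Mat 2) : conjMap σY ρ = !![ρ 1 1, -ρ 1 0; -ρ 0 1, ρ 0 0] := by
  rw [Matrix.eta_fin_two ρ]
  simp [conjMap, σY, conjTranspose_fin_two, mul_left_comm Complex.I]

lemma conjMap_σZ_apply (ρ : Mat 2) : conjMap σZ ρ = !![ρ 0 0, -ρ 0 1; -ρ 1 0, ρ 1 1] := by
  rw [Matrix.eta_fin_two ρ]
  simp [conjMap, σZ, conjTranspose_fin_two]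

lemma σZ_conjTranspose_mul_self : σZᴴ * σZ = 1 := by
  simp [σZ, conjTranspose_fin_two, Matrix.one_fin_two]

lemma ampDamp_apply {p : ℝ} (hp : p ∈ Set.Icc (0 : ℝ) 1) (ρ : Mat 2) :
    ampDamp p ρ = !![ρ 0 0 + p * ρ 1 1, √(1 - p) * ρ 0 1; √(1 - p) * ρ 1 0, (1 - p) * ρ 1 1] := by
  have hs : ((√(1 - p) : ℝ) : ℂ) * (√(1 - p) : ℝ) = 1 - p := by
    rw [← Complex.ofReal_mul, Real.mul_self_sqrt (by linarith [hp.2]), Complex.ofReal_sub,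
      Complex.ofReal_one]
  have ht : ((√p : ℝ) : ℂ) * (√p : ℝ) = (p : ℂ) := by
    rw [← Complex.ofReal_mul, Real.mul_self_sqrt hp.1]
  rw [Matrix.eta_fin_two ρ]
  simp [ampDamp, conjMap, conjTranspose_fin_two, mul_comm (ρ _ _), ← mul_assoc, hs, ht]

lemma ampDamp_sub_pauliTwirl_apply {p : ℝ} (hp : p ∈ Set.Icc (0 : ℝ) 1) (ρ : Mat 2) :
    (ampDamp p - pauliTwirl (ampDamp p)) ρ = ρ.trace • ((p / 2 : ℝ) • σZ) := by
  simp only [LinearMap.sub_apply, pauliTwirl, LinearMap.smul_apply, LinearMap.add_apply,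
    LinearMap.comp_apply, conjMap_σX_apply, conjMap_σY_apply, conjMap_σZ_apply, ampDamp_apply hp]
  ext i j
  fin_cases i <;> fin_cases j <;> simp [σZ, Matrix.trace_fin_two] <;> ring

/-- The Pauli covariance parameter of the amplitude damping channel A_p
equals p/2. -/
theorem cov_pauli_ampDamp (p : ℝ) (hp : p ∈ Set.Icc (0 : ℝ) 1) :
    diamondDist (ampDamp p) (pauliTwirl (ampDamp p)) = p / 2 := by
  refine diamondDist_eq_of_forall_isDensity (by linarith [hp.1]) fun r ρ hρ => ?_
  have hσ : ((p / 2 : ℝ) • ptraceRight ρ).PosSemidef :=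
    hρ.ptraceRight.1.smul (by linarith [hp.1])
  rw [← idTensor_sub, idTensor_eq_ptraceRight_kronecker (ampDamp_sub_pauliTwirl_apply hp),
    Matrix.kronecker_smul, ← Matrix.smul_kronecker,
    traceNorm_kronecker_of_unitary hσ σZ_conjTranspose_mul_self, Matrix.trace_smul,
    hρ.ptraceRight.2]
  simp only [Complex.smul_re, Complex.one_re, smul_eq_mul, Fintype.card_fin]
  ring
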